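/- arXiv:0906.3164 — 3 statements merged into one kernel-verified Lean document; each statement's English description precedes it below -/
import Mathlib

section
/- Let u_0 be a positive function of class C² on a half-line [ξ_0,∞) with u_0(x) → 0 as x → +∞ and u_0''(x) = o(u_0(x)) as x → +∞. Then u_0'(x) = o(u_0(x)) as x → +∞. -/
open Real Filter Set Topology

/-- If `f' ≥ 0` on `[a,b]` then `f a ≤ f b`. -/
lemma HR_mono_lemma (f f' : ℝ → ℝ) (a b : ℝ) (hab : a ≤ b)
    (hd : ∀ x ∈ Icc a b, HasDerivAt f (f' x) x)
    (h0 : ∀ x ∈ Icc a b, 0 ≤ f' x) : f a ≤ f b := by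
  have hmono : MonotoneOn f (Icc a b) := by
    apply monotoneOn_of_deriv_nonneg (convex_Icc a b)
    · exact fun x hx => ((hd x hx).continuousAt).continuousWithinAt
    · intro x hx
      rw [interior_Icc] at hx
      exact ((hd x (Ioo_subset_Icc_self hx)).differentiableAt).differentiableWithinAt
    · intro x hx
      rw [interior_Icc] at hx
      rw [(hd x (Ioo_subset_Icc_self hx)).deriv]
      exact h0 x (Ioo_subset_Icc_self hx)
  exact hmono ⟨le_refl a, hab⟩ ⟨hab, le_refl b⟩ hab

/-- If `f' ≥ 1/2` on `[a,b]` then `f a + (b-a)/2 ≤ f b`. -/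
lemma HR_grow_lemma (f f' : ℝ → ℝ) (a b : ℝ) (hab : a ≤ b)
    (hd : ∀ x ∈ Icc a b, HasDerivAt f (f' x) x)
    (hge : ∀ x ∈ Icc a b, (1:ℝ)/2 ≤ f' x) :
    f a + (b - a)/2 ≤ f b := by
  have h := HR_mono_lemma (fun x => f x - x/2) (fun x => f' x - 1/2) a b hab
    (fun x hx => (hd x hx).sub ((hasDerivAt_id x).div_const 2))
    (fun x hx => by have := hge x hx; linarith)
  linarith

/-- Forward invariance: if `f a ≤ c` and `f' < 0` wherever `f = c` on `[a,b]`, then `f b ≤ c`. -/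
lemma HR_inv_lemma (f f' : ℝ → ℝ) (a b c : ℝ) (hab : a ≤ b)
    (hd : ∀ x ∈ Icc a b, HasDerivAt f (f' x) x)
    (ha : f a ≤ c)
    (hbd : ∀ x ∈ Icc a b, f x = c → f' x < 0) :
    f b ≤ c := by
  by_contra hb
  push_neg at hb
  set S : Set ℝ := {x | x ∈ Icc a b ∧ f x ≤ c} with hS
  have hane : a ∈ S := ⟨⟨le_refl a, hab⟩, ha⟩
  have hSne : S.Nonempty := ⟨a, hane⟩
  have hSb : BddAbove S := ⟨b, fun x hx => hx.1.2⟩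
  set s := sSup S with hs
  have hsmem : s ∈ Icc a b := ⟨le_csSup hSb hane, csSup_le hSne (fun x hx => hx.1.2)⟩
  have hfs_le : f s ≤ c := by
    have hcw : ContinuousWithinAt f S s := ((hd s hsmem).continuousAt).continuousWithinAt
    have hclos : s ∈ closure S := csSup_mem_closure hSne hSb
    have : (𝓝[S] s).NeBot := mem_closure_iff_nhdsWithin_neBot.mp hclos
    exact le_of_tendsto hcw (eventually_nhdsWithin_of_forall (fun x hx => hx.2))
  have hsb : s < b := by
    rcases lt_or_eq_of_le hsmem.2 with h | h
    · exact h
    · exact absurd (h ▸ hfs_le) (not_le.mpr hb)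
  have hgt : ∀ x, x ∈ Ioc s b → c < f x := by
    intro x hx
    by_contra hle
    push_neg at hle
    have hxS : x ∈ S := ⟨⟨hsmem.1.trans hx.1.le, hx.2⟩, hle⟩
    exact absurd (le_csSup hSb hxS) (not_le.mpr hx.1)
  have hev_mem : ∀ᶠ x in 𝓝[>] s, x ∈ Ioc s b := by
    have hIic : Iic b ∈ 𝓝 s := Iic_mem_nhds hsb
    filter_upwards [self_mem_nhdsWithin, nhdsWithin_le_nhds hIic] with x h1 h2
    exact ⟨h1, h2⟩
  have hfs_ge : c ≤ f s := by
    have hcw : ContinuousWithinAt f (Ioi s) s := ((hd s hsmem).continuousAt).continuousWithinAt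
    exact ge_of_tendsto hcw (hev_mem.mono (fun x hx => (hgt x hx).le))
  have hfs : f s = c := le_antisymm hfs_le hfs_ge
  have hderiv_neg : f' s < 0 := hbd s hsmem hfs
  have hslope : Tendsto (slope f s) (𝓝[≠] s) (𝓝 (f' s)) :=
    hasDerivAt_iff_tendsto_slope.mp (hd s hsmem)
  have hslope' : Tendsto (slope f s) (𝓝[>] s) (𝓝 (f' s)) :=
    hslope.mono_left (nhdsWithin_mono s (fun y hy => ne_of_gt hy))
  have hev : ∀ᶠ x in 𝓝[>] s, slope f s x < 0 :=
    hslope'.eventually_lt_const hderiv_neg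
  obtain ⟨x, hx1, hx2⟩ := (hev.and hev_mem).exists
  have hxs : 0 < x - s := sub_pos.mpr hx2.1
  rw [slope_def_field] at hx1
  have hlt : f x - f s < 0 := by
    rw [div_lt_iff₀ hxs] at hx1
    linarith
  have := hgt x hx2
  rw [hfs] at hlt
  linarith

theorem first_deriv_small_of_second_deriv_small
    (u0 u0' u0'' : ℝ → ℝ) (ξ0 : ℝ)
    (hpos : ∀ x ≥ ξ0, 0 < u0 x)
    (hd1 : ∀ x ≥ ξ0, HasDerivAt u0 (u0' x) x)
    (hd2 : ∀ x ≥ ξ0, HasDerivAt u0' (u0'' x) x)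
    (hlim : Tendsto u0 atTop (nhds 0))
    (ho : Tendsto (fun x => u0'' x / u0 x) atTop (nhds 0)) :
    Tendsto (fun x => u0' x / u0 x) atTop (nhds 0) := by
  rw [Metric.tendsto_nhds]
  intro eps heps
  set e : ℝ := eps / 2 with hedef
  have he : 0 < e := by positivity
  have h2 : (0:ℝ) < e^2/2 := by positivity
  have hev := (Metric.tendsto_nhds.mp ho) (e^2/2) h2
  rw [eventually_atTop] at hev
  obtain ⟨A0, hA0⟩ := hev
  set A := max A0 ξ0 with hA
  have hAξ : ξ0 ≤ A := le_max_right _ _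
  have hx0 : ∀ x, A ≤ x → ξ0 ≤ x := fun x hx => hAξ.trans hx
  have hupos : ∀ x, A ≤ x → 0 < u0 x := fun x hx => hpos x (hx0 x hx)
  have hsmall : ∀ x, A ≤ x → |u0'' x / u0 x| < e^2/2 := by
    intro x hx
    have := hA0 x (le_trans (le_max_left _ _) hx)
    rwa [Real.dist_eq, sub_zero] at this
  set g : ℝ → ℝ := fun x => u0' x / u0 x with hgdef
  set G : ℝ → ℝ := fun x => u0'' x / u0 x - (g x)^2 with hGdef
  have hgd : ∀ x, A ≤ x → HasDerivAt g (G x) x := by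
    intro x hx
    have hne : u0 x ≠ 0 := (hupos x hx).ne'
    have h := (hd2 x (hx0 x hx)).div (hd1 x (hx0 x hx)) hne
    have key : u0'' x / u0 x - (u0' x / u0 x) ^ 2
        = (u0'' x * u0 x - u0' x * u0' x) / u0 x ^ 2 := by
      field_simp
    have hGx : G x = (u0'' x * u0 x - u0' x * u0' x) / u0 x ^ 2 := key
    rw [hGx]
    exact h
  have hGneg : ∀ x, A ≤ x → e ≤ |g x| → G x < 0 := by
    intro x hx habs
    have h1 : |u0'' x / u0 x| < e^2/2 := hsmall x hx
    have h2 : e^2 ≤ (g x)^2 := by nlinarith [abs_nonneg (g x), sq_abs (g x)]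
    have h3 : u0'' x / u0 x ≤ |u0'' x / u0 x| := le_abs_self _
    have : G x = u0'' x / u0 x - (g x)^2 := rfl
    rw [this]
    nlinarith
  -- Step 1 : somewhere g ≤ e
  have step1 : ∃ x2, A ≤ x2 ∧ g x2 ≤ e := by
    by_contra hcon
    push_neg at hcon
    have hmono : ∀ b, A ≤ b → u0 A ≤ u0 b := by
      intro b hb
      apply HR_mono_lemma u0 u0' A b hb
      · exact fun x hx => hd1 x (hx0 x hx.1)
      · intro x hx
        have hg := hcon x hx.1
        have hu := hupos x hx.1
        have hgg : 0 < u0' x / u0 x := lt_trans he hg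
        have : u0' x = (u0' x / u0 x) * u0 x := (div_mul_cancel₀ _ hu.ne').symm
        rw [this]
        exact (mul_pos hgg hu).le
    have hle : u0 A ≤ 0 :=
      ge_of_tendsto hlim (eventually_atTop.mpr ⟨A, fun b hb => hmono b hb⟩)
    linarith [hupos A le_rfl]
  obtain ⟨x2, hx2A, hx2⟩ := step1
  -- Step 2 : g ≤ e beyond x2
  have step2 : ∀ x, x2 ≤ x → g x ≤ e := by
    intro b hb
    apply HR_inv_lemma g G x2 b e hb
    · exact fun x hx => hgd x (hx2A.trans hx.1)
    · exact hx2
    · intro x hx hxc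
      apply hGneg x (hx2A.trans hx.1)
      rw [hxc]
      exact le_abs_self e
  -- Step 3 : g > -e beyond A
  have step3 : ∀ x, A ≤ x → -e < g x := by
    intro x1 hx1A
    by_contra hcon
    push_neg at hcon
    have stay : ∀ b, x1 ≤ b → g b ≤ -e := by
      intro b hb
      apply HR_inv_lemma g G x1 b (-e) hb
      · exact fun x hx => hgd x (hx1A.trans hx.1)
      · exact hcon
      · intro x hx hxc
        apply hGneg x (hx1A.trans hx.1)
        rw [hxc, abs_neg, abs_of_pos he]
    have hgneg : ∀ b, x1 ≤ b → g b < 0 :=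
      fun b hb => lt_of_le_of_lt (stay b hb) (by linarith)
    set h : ℝ → ℝ := fun x => (g x)⁻¹ with hhdef
    have hhd : ∀ b, x1 ≤ b → HasDerivAt h (-G b / (g b)^2) b := by
      intro b hb
      exact (hgd b (hx1A.trans hb)).inv (hgneg b hb).ne
    have hhge : ∀ b, x1 ≤ b → (1:ℝ)/2 ≤ -G b / (g b)^2 := by
      intro b hb
      have hsq : e^2 ≤ (g b)^2 := by nlinarith [stay b hb]
      have hGb : G b ≤ e^2/2 - (g b)^2 := by
        have h1 := hsmall b (hx1A.trans hb)
        have h3 : u0'' b / u0 b ≤ |u0'' b / u0 b| := le_abs_self _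
        have : G b = u0'' b / u0 b - (g b)^2 := rfl
        rw [this]
        linarith
      have hposq : 0 < (g b)^2 := by
        have := (hgneg b hb).ne
        positivity
      rw [le_div_iff₀ hposq]
      nlinarith
    set b := x1 + 4/e with hbdef
    have hble : x1 ≤ b := by
      have : 0 < 4/e := by positivity
      simp only [hbdef]
      linarith
    have hgrow := HR_grow_lemma h (fun x => -G x / (g x)^2) x1 b hble
      (fun x hx => hhd x hx.1) (fun x hx => hhge x hx.1)
    have hhx1 : -(e⁻¹) ≤ h x1 := by
      have h2 : (-(g x1))⁻¹ ≤ e⁻¹ := by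
        apply inv_anti₀ he
        linarith [hcon]
      have h3 : (-(g x1))⁻¹ = -(g x1)⁻¹ := by rw [inv_neg]
      have : h x1 = (g x1)⁻¹ := rfl
      rw [this]
      linarith [h2, h3.symm ▸ h2]
    have hhb : h b < 0 := by
      have : h b = (g b)⁻¹ := rfl
      rw [this]
      exact inv_lt_zero.mpr (hgneg b hble)
    have hkey : -(e⁻¹) + (b - x1)/2 = e⁻¹ := by
      simp only [hbdef]
      field_simp
      ring
    have hepos : 0 < e⁻¹ := by positivity
    linarith
  -- conclusion
  rw [eventually_atTop]
  refine ⟨max A x2, fun x hx => ?_⟩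
  have hxA : A ≤ x := le_trans (le_max_left _ _) hx
  have hxx2 : x2 ≤ x := le_trans (le_max_right _ _) hx
  have h1 := step2 x hxx2
  have h2 := step3 x hxA
  rw [Real.dist_eq, sub_zero, abs_lt]
  constructor
  · have : g x = u0' x / u0 x := rfl
    rw [← this]
    linarith
  · have : g x = u0' x / u0 x := rfl
    rw [← this]
    linarith
end

section
/- Let f : [0,1] → ℝ be C¹ with f(0)=f(1)=0 and 0 < f(s) ≤ f'(0)·s for all s ∈ (0,1). Let u_0 be C² and nonincreasing on [ξ_0,∞) with values in (0,1], and let ξ_1 ≥ ξ_0 be such that |u_0''(x)| ≤ (ε/2)·u_0(x) for all x ≥ ξ_1, where ε > 0. Set ρ = f'(0) + ε/2 and define ū(t,x) = min( u_0(x)·e^{ρt}/u_0(ξ_1), 1 ) for t ≥ 0, x ≥ ξ_1. Then at every point (t,x) ∈ [0,∞) × [ξ_1,∞) where ū(t,x) < 1, the function ū satisfies ū_t - ū_xx - f(ū) ≥ 0. -/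
open Real Filter Set Topology

/-! Where `ū < 1` it coincides with `v = u₀ e^{ρt}/u₀(ξ₁)`, so `v_t = ρ v = f'(0) v + (ε/2) v`,
which dominates `f(v) + v_xx` by the KPP bound and `|u₀''| ≤ (ε/2) u₀`. Since `u₀` is
nonincreasing, `ū < 1` persists to the right of `x`, and that one-sided neighbourhood already
determines the second spatial derivative (unless it is the junk value `0`). -/

/-- The candidate supersolution of Theorem 1(c): `ū(t,x) = min(u₀(x) e^{ρt}/u₀(ξ₁), 1)`. -/
noncomputable def ubar (u0 : ℝ → ℝ) (ρ ξ1 : ℝ) (t x : ℝ) : ℝ :=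
  min (u0 x * Real.exp (ρ * t) / u0 ξ1) 1

theorem HasDerivAt.min_const_of_lt {g : ℝ → ℝ} {g' c x : ℝ} (hg : HasDerivAt g g' x)
    (hx : g x < c) : HasDerivAt (fun y => min (g y) c) g' x := by
  refine hg.congr_of_eventuallyEq ?_
  filter_upwards [hg.continuousAt.eventually_lt continuousAt_const hx] with y hy
  exact min_eq_left hy.le

theorem deriv_eq_zero_or_eq_of_eqOn_Ici {φ ψ : ℝ → ℝ} {a x : ℝ} (hψ : HasDerivAt ψ a x)
    (h : EqOn φ ψ (Ici x)) : deriv φ x = 0 ∨ deriv φ x = a := by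
  by_cases hφ : DifferentiableAt ℝ φ x
  · right
    have hu : UniqueDiffWithinAt ℝ (Ici x) x := uniqueDiffOn_Ici x x self_mem_Ici
    have hφψ : HasDerivWithinAt ψ (deriv φ x) (Ici x) x :=
      hφ.hasDerivAt.hasDerivWithinAt.congr (fun y hy => (h hy).symm) (h self_mem_Ici).symm
    rw [← hφψ.derivWithin hu, hψ.hasDerivWithinAt.derivWithin hu]
  · exact Or.inl (deriv_zero_of_not_differentiableAt hφ)

section ubar

variable {u0 : ℝ → ℝ} {ρ ξ1 t x : ℝ}

theorem ubar_branch_lt_one (h : ubar u0 ρ ξ1 t x < 1) : u0 x * exp (ρ * t) / u0 ξ1 < 1 :=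
  (min_lt_iff.mp h).resolve_right (lt_irrefl 1)

theorem ubar_eq_of_lt_one (h : ubar u0 ρ ξ1 t x < 1) :
    ubar u0 ρ ξ1 t x = u0 x * exp (ρ * t) / u0 ξ1 :=
  min_eq_left (ubar_branch_lt_one h).le

theorem hasDerivAt_ubar_time (h : ubar u0 ρ ξ1 t x < 1) :
    HasDerivAt (fun s => ubar u0 ρ ξ1 s x) (ρ * ubar u0 ρ ξ1 t x) t := by
  have hbranch : HasDerivAt (fun s => u0 x * exp (ρ * s) / u0 ξ1)
      (u0 x * (exp (ρ * t) * ρ) / u0 ξ1) t := by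
    simpa using ((((hasDerivAt_id t).const_mul ρ).exp).const_mul (u0 x)).div_const (u0 ξ1)
  refine (hbranch.min_const_of_lt (ubar_branch_lt_one h)).congr_deriv ?_
  rw [ubar_eq_of_lt_one h]
  ring

theorem hasDerivAt_ubar_space {u0' : ℝ} (hu : HasDerivAt u0 u0' x) (h : ubar u0 ρ ξ1 t x < 1) :
    HasDerivAt (fun y => ubar u0 ρ ξ1 t y) (u0' * exp (ρ * t) / u0 ξ1) x :=
  ((hu.mul_const _).div_const _).min_const_of_lt (ubar_branch_lt_one h)

theorem ubar_antitoneOn {ξ0 : ℝ} (hmono : AntitoneOn u0 (Ici ξ0)) (hξ1 : 0 < u0 ξ1) :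
    AntitoneOn (ubar u0 ρ ξ1 t) (Ici ξ0) := by
  intro x hx y hy hxy
  unfold ubar
  gcongr
  exact hmono hx hy hxy

end ubar

theorem ubar_supersolution_general
    (f u0 u0' u0'' : ℝ → ℝ) (ξ0 ξ1 ε : ℝ)
    (hkpp : ∀ s ∈ Set.Ioo (0:ℝ) 1, 0 < f s ∧ f s ≤ deriv f 0 * s)
    (hεpos : 0 < ε) (hξ : ξ0 ≤ ξ1)
    (hrange : ∀ x ∈ Set.Ici ξ0, u0 x ∈ Set.Ioc (0:ℝ) 1)
    (hmono : AntitoneOn u0 (Set.Ici ξ0))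
    (hd1 : ∀ x ∈ Set.Ici ξ0, HasDerivAt u0 (u0' x) x)
    (hd2 : ∀ x ∈ Set.Ici ξ0, HasDerivAt u0' (u0'' x) x)
    (hsmall : ∀ x ≥ ξ1, |u0'' x| ≤ (ε / 2) * u0 x) :
    ∀ t ≥ (0:ℝ), ∀ x ≥ ξ1,
      ubar u0 (deriv f 0 + ε / 2) ξ1 t x < 1 →
      deriv (fun s => ubar u0 (deriv f 0 + ε / 2) ξ1 s x) t
        - deriv (deriv (fun y => ubar u0 (deriv f 0 + ε / 2) ξ1 t y)) x
        - f (ubar u0 (deriv f 0 + ε / 2) ξ1 t x) ≥ 0 := by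
  intro t _ x hx hlt
  set ρ := deriv f 0 + ε / 2 with hρ
  set w := ubar u0 ρ ξ1 t x
  have hx0 : x ∈ Ici ξ0 := hξ.trans hx
  have hξ1 : 0 < u0 ξ1 := (hrange ξ1 hξ).1
  have hw : w = u0 x * exp (ρ * t) / u0 ξ1 := ubar_eq_of_lt_one hlt
  have hw_pos : 0 < w := by rw [hw]; have := (hrange x hx0).1; positivity
  have hspace := deriv_eq_zero_or_eq_of_eqOn_Ici (φ := deriv (fun y => ubar u0 ρ ξ1 t y))
    (((hd2 x hx0).mul_const (exp (ρ * t))).div_const (u0 ξ1)) fun y (hy : x ≤ y) =>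
      have hy0 : y ∈ Ici ξ0 := le_trans hx0 hy
      (hasDerivAt_ubar_space (hd1 y hy0)
        ((ubar_antitoneOn hmono hξ1 hx0 hy0 hy).trans_lt hlt)).deriv
  have hsecond : deriv (deriv (fun y => ubar u0 ρ ξ1 t y)) x ≤ ε / 2 * w := by
    rcases hspace with h | h
    · rw [h]; positivity
    · calc _ = u0'' x * exp (ρ * t) / u0 ξ1 := h
        _ ≤ ε / 2 * u0 x * exp (ρ * t) / u0 ξ1 := by
          gcongr; exact (le_abs_self _).trans (hsmall x hx)
        _ = ε / 2 * w := by rw [hw]; ring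
  have hkpp_w := (hkpp w ⟨hw_pos, hlt⟩).2
  rw [(hasDerivAt_ubar_time hlt).deriv]
  linarith [show ρ * w = deriv f 0 * w + ε / 2 * w by rw [hρ]; ring]

theorem ubar_supersolution
    (f u0 u0' u0'' : ℝ → ℝ) (ξ0 ξ1 ε : ℝ)
    (hf : ContDiff ℝ 1 f) (hf0 : f 0 = 0) (hf1 : f 1 = 0)
    (hkpp : ∀ s ∈ Set.Ioo (0:ℝ) 1, 0 < f s ∧ f s ≤ deriv f 0 * s)
    (hεpos : 0 < ε) (hξ : ξ0 ≤ ξ1)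
    (hrange : ∀ x ∈ Set.Ici ξ0, u0 x ∈ Set.Ioc (0:ℝ) 1)
    (hmono : AntitoneOn u0 (Set.Ici ξ0))
    (hd1 : ∀ x ∈ Set.Ici ξ0, HasDerivAt u0 (u0' x) x)
    (hd2 : ∀ x ∈ Set.Ici ξ0, HasDerivAt u0' (u0'' x) x)
    (hsmall : ∀ x ≥ ξ1, |u0'' x| ≤ (ε / 2) * u0 x) :
    ∀ t ≥ (0:ℝ), ∀ x ≥ ξ1,
      ubar u0 (deriv f 0 + ε / 2) ξ1 t x < 1 →
      deriv (fun s => ubar u0 (deriv f 0 + ε / 2) ξ1 s x) t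
        - deriv (deriv (fun y => ubar u0 (deriv f 0 + ε / 2) ξ1 t y)) x
        - f (ubar u0 (deriv f 0 + ε / 2) ξ1 t x) ≥ 0 :=
  ubar_supersolution_general f u0 u0' u0'' ξ0 ξ1 ε hkpp hεpos hξ hrange hmono hd1 hd2 hsmall
end

section
/- Given any locally bounded function ξ : [0,∞) → ℝ, there exists a C¹ function g : [0,∞) → ℝ which is C² outside an at most countable set E ⊂ [0,∞), such that g(t) ≥ ξ(2t) for all t ≥ 0, g'(t) > 0 for all t ≥ 0, g'(t) → +∞ as t → +∞, and g''(t) = O(g'(t)²) as t → +∞ on [0,∞) ∖ E. -/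
/-!
Take `g(t) = ∫_{-1}^t f` with `f = 1/h`, where `h` is the piecewise-linear interpolation of
`1/c n` for a monotone sequence `c n ≥ n + 1` dominating the local bounds of `ξ`. As `h`
decreases with slopes in `[-1, 0]`, `f ≥ c ⌊t⌋₊`, and away from the integers
`f' = -h'/h² ∈ [0, f²]`. Integrating over `[t - 1, t]` gives `g t ≥ c ⌊t - 1⌋₊ ≥ ξ (2t)`.
-/

open Real Filter Set Topology

/-- The piecewise-linear function through the points `(n, a n)`, equal to `a 0` on `(-∞, 0]`. -/
noncomputable def natInterp (a : ℕ → ℝ) (t : ℝ) : ℝ :=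
  a 0 + ∑' k : ℕ, (a (k + 1) - a k) * projIcc (0 : ℝ) 1 zero_le_one (t - k)

section natInterp

variable (a : ℕ → ℝ)

theorem natInterp_eq_sum {t : ℝ} {N : ℕ} (ht : t ≤ N) :
    natInterp a t =
      a 0 + ∑ k ∈ Finset.range N, (a (k + 1) - a k) * projIcc (0 : ℝ) 1 zero_le_one (t - k) := by
  rw [natInterp, tsum_eq_sum]
  intro k hk
  have hk : (N : ℝ) ≤ k := by exact_mod_cast not_lt.1 (Finset.mem_range.not.1 hk)
  rw [projIcc_of_le_left _ (by linarith), Subtype.coe_mk, mul_zero]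

theorem natInterp_of_nonpos {t : ℝ} (ht : t ≤ 0) : natInterp a t = a 0 := by
  simp [natInterp_eq_sum a (N := 0) (by exact_mod_cast ht)]

theorem natInterp_of_mem_Icc {n : ℕ} {t : ℝ} (ht : t ∈ Icc (n : ℝ) (n + 1)) :
    natInterp a t = a n + (a (n + 1) - a n) * (t - n) := by
  have hfull : ∀ k ∈ Finset.range n,
      (a (k + 1) - a k) * projIcc (0 : ℝ) 1 zero_le_one (t - k) = a (k + 1) - a k := by
    intro k hk
    have hk : (k : ℝ) + 1 ≤ n := by exact_mod_cast Finset.mem_range.1 hk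
    rw [projIcc_of_right_le _ (by linarith [ht.1]), Subtype.coe_mk, mul_one]
  rw [natInterp_eq_sum a (N := n + 1) (by push_cast; exact ht.2), Finset.sum_range_succ,
    Finset.sum_congr rfl hfull, Finset.sum_range_sub,
    projIcc_of_mem _ ⟨by linarith [ht.1], by linarith [ht.2]⟩]
  ring

theorem continuous_natInterp : Continuous (natInterp a) := by
  refine continuous_iff_continuousAt.2 fun t => ?_
  obtain ⟨N, hN⟩ := exists_nat_gt t
  have hsum : Continuous fun s : ℝ =>
      a 0 + ∑ k ∈ Finset.range N, (a (k + 1) - a k) * projIcc (0 : ℝ) 1 zero_le_one (s - k) := by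
    fun_prop
  exact hsum.continuousAt.congr <|
    (eventually_lt_nhds hN).mono fun s hs => (natInterp_eq_sum a hs.le).symm

theorem hasDerivAt_natInterp {t : ℝ} (ht : 0 ≤ t) (hnat : t ∉ range ((↑) : ℕ → ℝ)) :
    HasDerivAt (natInterp a) (a (⌊t⌋₊ + 1) - a ⌊t⌋₊) t := by
  set n := ⌊t⌋₊
  have hlt : (n : ℝ) < t := (Nat.floor_le ht).lt_of_ne fun h => hnat ⟨n, h⟩
  have haffine : natInterp a =ᶠ[𝓝 t] fun s => a n + (a (n + 1) - a n) * (s - n) :=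
    eventually_of_mem (Ioo_mem_nhds hlt (Nat.lt_floor_add_one t)) fun s hs =>
      natInterp_of_mem_Icc a ⟨hs.1.le, hs.2.le⟩
  have := (((hasDerivAt_id t).sub_const (n : ℝ)).const_mul (a (n + 1) - a n)).const_add (a n)
  simpa using this.congr_of_eventuallyEq haffine

variable {a}

theorem natInterp_mem_Icc (ha : Antitone a) (t : ℝ) :
    natInterp a t ∈ Icc (a (⌊t⌋₊ + 1)) (a ⌊t⌋₊) := by
  rcases le_total t 0 with ht | ht
  · rw [natInterp_of_nonpos a ht, Nat.floor_of_nonpos ht]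
    exact ⟨ha zero_le_one, le_rfl⟩
  · have hfrac : t - ⌊t⌋₊ ∈ Icc (0 : ℝ) 1 :=
      ⟨sub_nonneg.2 (Nat.floor_le ht), by linarith [Nat.lt_floor_add_one t]⟩
    have hstep := ha (Nat.le_succ ⌊t⌋₊)
    rw [natInterp_of_mem_Icc a ⟨Nat.floor_le ht, (Nat.lt_floor_add_one t).le⟩]
    constructor <;> nlinarith [hfrac.1, hfrac.2]

end natInterp

theorem exists_continuous_ge_comp_floor_abs_deriv_le_sq {c : ℕ → ℝ} (hc : Monotone c)
    (hc1 : ∀ n, 1 ≤ c n) :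
    ∃ f : ℝ → ℝ, Continuous f ∧ (∀ s, c ⌊s⌋₊ ≤ f s) ∧
      ∀ t, 0 ≤ t → t ∉ range ((↑) : ℕ → ℝ) → ∃ f', HasDerivAt f f' t ∧ |f'| ≤ f t ^ 2 := by
  have hcpos n : 0 < c n := zero_lt_one.trans_le (hc1 n)
  set h := natInterp fun n => (c n)⁻¹
  have hbounds : ∀ t, h t ∈ Icc (c (⌊t⌋₊ + 1))⁻¹ (c ⌊t⌋₊)⁻¹ :=
    natInterp_mem_Icc fun m n hmn => inv_anti₀ (hcpos m) (hc hmn)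
  have hpos t : 0 < h t := (inv_pos.2 (hcpos _)).trans_le (hbounds t).1
  refine ⟨h⁻¹, (continuous_natInterp _).inv₀ fun t => (hpos t).ne',
    fun s => (le_inv_comm₀ (hpos s) (hcpos _)).1 (hbounds s).2, fun t ht hnat => ?_⟩
  set n := ⌊t⌋₊
  refine ⟨_, (hasDerivAt_natInterp _ ht hnat).inv (hpos t).ne', ?_⟩
  have hdrop : 0 ≤ (c n)⁻¹ - (c (n + 1))⁻¹ := sub_nonneg.2 (inv_anti₀ (hcpos n) (hc n.le_succ))
  have hdrop_le : (c n)⁻¹ - (c (n + 1))⁻¹ ≤ 1 := by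
    linarith [inv_le_one_of_one_le₀ (hc1 n), inv_nonneg.2 (hcpos (n + 1)).le]
  rw [neg_sub, abs_of_nonneg (div_nonneg hdrop (sq_nonneg _)), div_eq_mul_inv, Pi.inv_apply,
    inv_pow]
  exact mul_le_of_le_one_left (by positivity) hdrop_le

theorem le_integral_of_ge_comp_floor {c : ℕ → ℝ} {f : ℝ → ℝ} (hc : Monotone c) (hc0 : 0 ≤ c 0)
    (hf : Continuous f) (hfc : ∀ s, c ⌊s⌋₊ ≤ f s) {t : ℝ} (ht : 0 ≤ t) :
    c ⌊t - 1⌋₊ ≤ ∫ s in (-1)..t, f s := by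
  have hf_nonneg s : 0 ≤ f s := hc0.trans ((hc (Nat.zero_le _)).trans (hfc s))
  calc c ⌊t - 1⌋₊ = ∫ _ in (t - 1)..t, c ⌊t - 1⌋₊ := by simp
    _ ≤ ∫ s in (t - 1)..t, f s :=
      intervalIntegral.integral_mono_on (by linarith) intervalIntegrable_const
        (hf.intervalIntegrable _ _) fun s hs => (hc (Nat.floor_mono hs.1)).trans (hfc s)
    _ ≤ ∫ s in (-1)..t, f s :=
      intervalIntegral.integral_mono_interval (by linarith) (by linarith) le_rfl
        (Eventually.of_forall hf_nonneg) (hf.intervalIntegrable _ _)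

theorem exists_overtaking_function
    (ξ : ℝ → ℝ)
    (hξ : ∀ r ≥ (0:ℝ), ∃ M : ℝ, ∀ t ∈ Set.Icc (0:ℝ) r, |ξ t| ≤ M) :
    ∃ (g : ℝ → ℝ) (E : Set ℝ), E.Countable ∧
      ContDiffOn ℝ 1 g (Set.Ici (0:ℝ)) ∧
      (∀ t ∈ Set.Ici (0:ℝ) \ E, DifferentiableAt ℝ (deriv g) t) ∧
      (∀ t ≥ (0:ℝ), g t ≥ ξ (2 * t)) ∧
      (∀ t ≥ (0:ℝ), 0 < deriv g t) ∧
      Tendsto (deriv g) atTop atTop ∧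
      (∃ K C : ℝ, ∀ t ∈ Set.Ici (0:ℝ) \ E, t ≥ K →
        |deriv (deriv g) t| ≤ C * (deriv g t) ^ 2) := by
  choose M hM using fun n : ℕ => hξ (2 * n + 4) (by positivity)
  set u : ℕ → ℝ := fun n => max ((n : ℝ) + 1) (M n)
  set c := partialSups u
  have hc_ge (n : ℕ) : max ((n : ℝ) + 1) (M n) ≤ c n := le_partialSups u n
  have hc1 (n : ℕ) : 1 ≤ c n := by
    linarith [(le_max_left _ _).trans (hc_ge n), n.cast_nonneg (α := ℝ)]
  obtain ⟨f, hf, hfc, hf'⟩ := exists_continuous_ge_comp_floor_abs_deriv_le_sq c.monotone hc1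
  have hg t : HasDerivAt (fun t => ∫ s in (-1)..t, f s) (f t) t :=
    intervalIntegral.integral_hasDerivAt_right (hf.intervalIntegrable _ _)
      (hf.stronglyMeasurableAtFilter _ _) hf.continuousAt
  have hg' : deriv (fun t => ∫ s in (-1)..t, f s) = f := funext fun t => (hg t).deriv
  refine ⟨_, range ((↑) : ℕ → ℝ), countable_range _,
    (contDiff_one_iff_deriv.2 ⟨fun t => (hg t).differentiableAt, hg'.symm ▸ hf⟩).contDiffOn,
    fun t ht => ?_, fun t ht => ?_, fun t _ => ?_, ?_, 0, 1, fun t ht _ => ?_⟩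
  · rw [hg']
    obtain ⟨f', hf'', -⟩ := hf' t ht.1 ht.2
    exact hf''.differentiableAt
  · set n := ⌊t - 1⌋₊
    have h2t : 2 * t ≤ 2 * n + 4 := by linarith [Nat.lt_floor_add_one (t - 1)]
    calc ξ (2 * t) ≤ M n := (le_abs_self _).trans (hM n _ ⟨by linarith, h2t⟩)
      _ ≤ c n := (le_max_right _ _).trans (hc_ge n)
      _ ≤ _ := le_integral_of_ge_comp_floor c.monotone (zero_le_one.trans (hc1 0)) hf hfc ht
  · rw [hg']
    exact zero_lt_one.trans_le ((hc1 _).trans (hfc t))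
  · rw [hg']
    refine tendsto_atTop_mono (fun t => show t ≤ f t from ?_) tendsto_id
    linarith [Nat.lt_floor_add_one t, (le_max_left _ _).trans (hc_ge ⌊t⌋₊), hfc t]
  · obtain ⟨f', hf'', hbound⟩ := hf' t ht.1 ht.2
    rw [hg', hf''.deriv, one_mul]
    exact hbound
end
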